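/- Let a > b > 0, ε ∈ {+1,−1}, and let x ∈ ℝ⁹ be any point of the pendulum family 𝓛₃ (ε=+1) or 𝓛₄ (ε=−1), i.e. x has ω = (0,v,0), α = (a cos θ, 0, a sin θ), β = (0, εb, 0) for some v,θ ∈ ℝ. Then the integrals satisfy K(x) = (H(x) + 2εb)² and G(x) = b² H(x) − εb(a² − b²). -/
import Mathlib

noncomputable section

/-- The energy integral `H = ω₁²+ω₂²+½ω₃²−α₁−β₂`. -/
def kovH (x : Fin 9 → ℝ) : ℝ := (x 0)^2 + (x 1)^2 + (x 2)^2 / 2 - x 3 - x 7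

/-- The Kovalevskaya-type integral `K = (ω₁²−ω₂²+α₁−β₂)² + (2ω₁ω₂+α₂+β₁)²`. -/
def kovK (x : Fin 9 → ℝ) : ℝ :=
  ((x 0)^2 - (x 1)^2 + x 3 - x 7)^2 + (2 * x 0 * x 1 + x 4 + x 6)^2

/-- The integral `G` of the Kovalevskaya top in a double field. -/
def kovG (a b : ℝ) (x : Fin 9 → ℝ) : ℝ :=
  (x 0 * x 3 + x 1 * x 4 + x 5 * x 2 / 2)^2
  + (x 0 * x 6 + x 1 * x 7 + x 8 * x 2 / 2)^2
  + x 2 * ((x 4 * x 8 - x 5 * x 7) * x 0 + (x 5 * x 6 - x 3 * x 8) * x 1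
      + (x 3 * x 7 - x 4 * x 6) * x 2 / 2)
  - x 3 * b^2 - x 7 * a^2

/-- on the pendulum families `𝓛₃` (ε=+1), `𝓛₄` (ε=−1) one has
`K = (H + 2εb)²` and `G = b²H − εb(a²−b²)`. -/
theorem integrals_on_L34 (a b : ℝ) (hb : 0 < b) (hab : b < a)
    (ε : ℝ) (hε : ε = 1 ∨ ε = -1) (v θ : ℝ)
    (x : Fin 9 → ℝ)
    (hx : x = ![0, v, 0, a * Real.cos θ, 0, a * Real.sin θ, 0, ε * b, 0]) :
    kovK x = (kovH x + 2 * ε * b)^2 ∧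
    kovG a b x = b^2 * kovH x - ε * b * (a^2 - b^2) := by
  have h0 : x 0 = 0 := by rw [hx]; rfl
  have h1 : x 1 = v := by rw [hx]; rfl
  have h2 : x 2 = 0 := by rw [hx]; rfl
  have h3 : x 3 = a * Real.cos θ := by rw [hx]; rfl
  have h4 : x 4 = 0 := by rw [hx]; rfl
  have h5 : x 5 = a * Real.sin θ := by rw [hx]; rfl
  have h6 : x 6 = 0 := by rw [hx]; rfl
  have h7 : x 7 = ε * b := by rw [hx]; rfl
  have h8 : x 8 = 0 := by rw [hx]; rfl
  have hε2 : ε^2 = 1 := by rcases hε with h | h <;> simp [h]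
  simp only [kovK, kovH, kovG, h0, h1, h2, h3, h4, h5, h6, h7, h8]
  constructor <;> nlinarith [hε2, sq_nonneg v, sq_nonneg (Real.cos θ)]
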